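/- arXiv:math/0309370 — 2 statements merged into one kernel-verified Lean document; each statement's English description precedes it below -/
import Mathlib

section
/- Let n ≥ 3, let M be a connected topological (n−1)-manifold, and let r : M → ℝⁿ be a continuous map that is locally convex at every point of M. Then any two points p, q ∈ M can be connected by a continuous path γ : [0,1] → M with γ(0) = p and γ(1) = q such that r ∘ γ has finite total variation (finite length); in particular d_r(p,q) < ∞ for all p, q ∈ M, and M is path-connected. -/
open scoped RealInnerProductSpace ENNReal
open Set

/-- Euclidean `n`-space `ℝⁿ`. -/
noncomputable abbrev Euc (n : ℕ) : Type := EuclideanSpace ℝ (Fin n)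

/-- `M` is a topological `d`-manifold: every point has an open neighborhood
homeomorphic to `ℝ^d` (Hausdorffness is assumed separately via `T2Space`). -/
def IsTopManifoldOfDim (M : Type*) [TopologicalSpace M] (d : ℕ) : Prop :=
  ∀ p : M, ∃ U : Set M, IsOpen U ∧ p ∈ U ∧ Nonempty (U ≃ₜ Euc d)

/-- `r : M → ℝⁿ` is locally convex at `p` (in the sense of Bouligand): some open
neighborhood `U` of `p` is mapped by `r` homeomorphically onto an open subset `V` of
the frontier of a closed convex body `K`, with `r p ∈ V`. -/
def IsLocallyConvexAt {M : Type*} [TopologicalSpace M] {n : ℕ}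
    (r : M → Euc n) (p : M) : Prop :=
  ∃ (U : Set M) (K V : Set (Euc n)),
    IsOpen U ∧ p ∈ U ∧
    IsClosed K ∧ Convex ℝ K ∧ (interior K).Nonempty ∧
    V ⊆ frontier K ∧ r p ∈ V ∧ (∃ W : Set (Euc n), IsOpen W ∧ V = W ∩ frontier K) ∧
    ∃ e : U ≃ₜ V, ∀ x : U, (e x : Euc n) = r x

/-- `r : M → ℝⁿ` is strictly locally convex at `p`: locally convex at `p`, where
moreover the convex body `K` can be chosen together with a nonzero vector `u` such that
`K \ {r p}` lies in the open half-space `{x | ⟪x - r p, u⟫ > 0}`. -/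
def IsStrictlyLocallyConvexAt {M : Type*} [TopologicalSpace M] {n : ℕ}
    (r : M → Euc n) (p : M) : Prop :=
  ∃ (U : Set M) (K V : Set (Euc n)) (u : Euc n),
    u ≠ 0 ∧ (∀ x ∈ K \ {r p}, 0 < ⟪x - r p, u⟫) ∧
    IsOpen U ∧ p ∈ U ∧
    IsClosed K ∧ Convex ℝ K ∧ (interior K).Nonempty ∧
    V ⊆ frontier K ∧ r p ∈ V ∧ (∃ W : Set (Euc n), IsOpen W ∧ V = W ∩ frontier K) ∧
    ∃ e : U ≃ₜ V, ∀ x : U, (e x : Euc n) = r x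

/-- The length (total variation) of the image under `r` of a path `γ` in `M`. -/
noncomputable def pathLength {M : Type*} [TopologicalSpace M] {n : ℕ}
    (r : M → Euc n) {p q : M} (γ : Path p q) : ℝ≥0∞ :=
  eVariationOn (fun t => r (γ t)) Set.univ

/-- The length pseudometric on `M` induced by `r`. -/
noncomputable def lengthDist {M : Type*} [TopologicalSpace M] {n : ℕ}
    (r : M → Euc n) (p q : M) : ℝ≥0∞ :=
  ⨅ γ : Path p q, pathLength r γ

/-- `M` is complete with respect to the induced length pseudometric: every sequence
that is Cauchy for `lengthDist r` converges in the topology of `M`. -/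
def CompleteWrtLengthDist {M : Type*} [TopologicalSpace M] {n : ℕ}
    (r : M → Euc n) : Prop :=
  ∀ x : ℕ → M,
    (∀ ε : ℝ≥0∞, 0 < ε → ∃ N : ℕ, ∀ m ≥ N, ∀ k ≥ N, lengthDist r (x m) (x k) < ε) →
    ∃ p : M, Filter.Tendsto x Filter.atTop (nhds p)

/-!
Near a point `p`, `r` identifies a neighbourhood of `p` with an open piece of the frontier of a
convex body `K`. Radial projection from an interior point `z` of `K` onto its frontier is Lipschitz
near the frontier, because the gauge of `K` about `z` is Lipschitz and close to `1` there. It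
therefore carries the straight segment from `r p` to a nearby frontier point `r q` to an arc of
finite length in the frontier, which lifts to `M`. So being joined by a path of finite length is an
equivalence relation with open classes, and connectedness of `M` makes it total.
-/

open scoped NNReal Topology

section Lipschitz

variable {α : Type*} [PseudoMetricSpace α] {s : Set α}

lemma LipschitzOnWith.inv_of_le {f : α → ℝ} {K m : ℝ≥0} (hf : LipschitzOnWith K f s)
    (hm : 0 < m) (hfm : ∀ x ∈ s, (m : ℝ) ≤ f x) :
    LipschitzOnWith (K / m ^ 2) (fun x => (f x)⁻¹) s := by
  refine LipschitzOnWith.of_dist_le_mul fun x hx y hy => ?_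
  have hx0 : 0 < f x := (NNReal.coe_pos.2 hm).trans_le (hfm x hx)
  have hy0 : 0 < f y := (NNReal.coe_pos.2 hm).trans_le (hfm y hy)
  calc dist (f x)⁻¹ (f y)⁻¹ = dist (f x) (f y) / (f x * f y) := by
        rw [dist_inv_inv₀ hx0.ne' hy0.ne', Real.norm_of_nonneg hx0.le, Real.norm_of_nonneg hy0.le]
    _ ≤ K * dist x y / (m * m) :=
        div_le_div₀ (by positivity) (hf.dist_le_mul x hx y hy) (by positivity)
          (mul_le_mul (hfm x hx) (hfm y hy) m.2 hx0.le)
    _ = ↑(K / m ^ 2) * dist x y := by push_cast; ring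

lemma LipschitzOnWith.smul_of_norm_le {𝕜 E : Type*} [NormedField 𝕜] [SeminormedAddCommGroup E]
    [NormedSpace 𝕜 E] {f : α → 𝕜} {g : α → E} {Kf Kg A B : ℝ≥0}
    (hf : LipschitzOnWith Kf f s) (hg : LipschitzOnWith Kg g s)
    (hfA : ∀ x ∈ s, ‖f x‖ ≤ A) (hgB : ∀ x ∈ s, ‖g x‖ ≤ B) :
    LipschitzOnWith (A * Kg + B * Kf) (fun x => f x • g x) s := by
  refine LipschitzOnWith.of_dist_le_mul fun x hx y hy => ?_
  calc dist (f x • g x) (f y • g y) = ‖f x • (g x - g y) + (f x - f y) • g y‖ := by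
        rw [dist_eq_norm, smul_sub, sub_smul, sub_add_sub_cancel]
    _ ≤ ‖f x‖ * dist (g x) (g y) + dist (f x) (f y) * ‖g y‖ := by
        rw [dist_eq_norm, dist_eq_norm, ← norm_smul, ← norm_smul]
        exact norm_add_le _ _
    _ ≤ A * (Kg * dist x y) + Kf * dist x y * B :=
        add_le_add (mul_le_mul (hfA x hx) (hg.dist_le_mul x hx y hy) dist_nonneg A.2)
          (mul_le_mul (hf.dist_le_mul x hx y hy) (hgB y hy) (norm_nonneg _) (by positivity))
    _ = ↑(A * Kg + B * Kf) * dist x y := by push_cast; ring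

lemma LipschitzOnWith.eVariationOn_comp_lineMap_lt_top {E F : Type*} [NormedAddCommGroup E]
    [NormedSpace ℝ E] [PseudoEMetricSpace F] {f : E → F} {C : ℝ≥0} {a b : E}
    (hf : LipschitzOnWith C f (segment ℝ a b)) :
    eVariationOn (fun t : unitInterval => f (AffineMap.lineMap a b (t : ℝ))) univ < ⊤ := by
  have hval : eVariationOn (Subtype.val : unitInterval → ℝ) univ < ⊤ := by
    have h := ((Subtype.mono_coe (· ∈ Icc (0 : ℝ) 1)).monotoneOn univ).eVariationOn_eq
      (mem_univ 0) (mem_univ 1)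
    refine (eVariationOn.mono (s := univ ∩ Icc (0 : unitInterval) 1) _
      fun t _ => ⟨mem_univ t, t.2.1, t.2.2⟩).trans_lt ?_
    rw [h]
    exact ENNReal.ofReal_lt_top
  calc eVariationOn (f ∘ (AffineMap.lineMap a b ∘ Subtype.val)) univ
      ≤ C * eVariationOn (AffineMap.lineMap a b ∘ Subtype.val) univ :=
        hf.comp_eVariationOn_le fun t _ => lineMap_mem_segment ℝ a b t.2
    _ ≤ C * (nndist a b * eVariationOn (Subtype.val : unitInterval → ℝ) univ) := by
        gcongr
        exact (lipschitzWith_lineMap a b).lipschitzOnWith.comp_eVariationOn_le (mapsTo_univ _ _)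
    _ < ⊤ := by finiteness

end Lipschitz

section PathLength

variable {M : Type*} [TopologicalSpace M] {n : ℕ} (r : M → Euc n)

lemma pathLength_eq_eVariationOn_extend {p q : M} (γ : Path p q) :
    pathLength r γ = eVariationOn (r ∘ γ.extend) (Icc 0 1) := by
  have h := eVariationOn.comp_eq_of_monotoneOn (r ∘ γ.extend) _
    ((Subtype.mono_coe (· ∈ Icc (0 : ℝ) 1)).monotoneOn univ)
  rw [image_univ, Subtype.range_coe] at h
  rw [← h]
  simp only [pathLength, Function.comp_def, Path.extend_extends']

lemma pathLength_symm {p q : M} (γ : Path p q) : pathLength r γ.symm = pathLength r γ := by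
  have h := eVariationOn.comp_eq_of_antitoneOn (fun t => r (γ t)) (t := univ) unitInterval.symm
    (fun s _ t _ hst => unitInterval.symm_le_symm.2 hst)
  rw [image_univ_of_surjective unitInterval.symm_bijective.surjective] at h
  exact h

lemma pathLength_trans {p q s : M} (γ : Path p q) (γ' : Path q s) :
    pathLength r (γ.trans γ') = pathLength r γ + pathLength r γ' := by
  simp only [pathLength_eq_eVariationOn_extend]
  have hsplit := eVariationOn.Icc_add_Icc (r ∘ (γ.trans γ').extend) (s := univ)
    (by norm_num : (0 : ℝ) ≤ 1 / 2) (by norm_num : (1 / 2 : ℝ) ≤ 1) (mem_univ _)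
  simp only [univ_inter] at hsplit
  rw [← hsplit]
  congr 1
  · rw [eVariationOn.eq_of_eqOn (f' := (r ∘ γ.extend) ∘ (2 * ·))
      fun t ht => by simp [Path.extend_trans_of_le_half _ _ ht.2],
      eVariationOn.comp_eq_of_monotoneOn _ _ fun s _ t _ hst => by linarith,
      image_mul_left_Icc' two_pos]
    norm_num
  · rw [eVariationOn.eq_of_eqOn (f' := (r ∘ γ'.extend) ∘ (fun t => 2 * t - 1))
      fun t ht => by simp [Path.extend_trans_of_half_le _ _ ht.1],
      eVariationOn.comp_eq_of_monotoneOn _ _ fun s _ t _ hst => by linarith,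
      show (fun t : ℝ => 2 * t - 1) = (· - 1) ∘ (2 * ·) from rfl, image_comp,
      image_mul_left_Icc' two_pos, image_sub_const_Icc]
    norm_num

end PathLength

lemma preimage_add_right_mem_nhds_zero {G : Type*} [TopologicalSpace G] [AddGroup G]
    [IsTopologicalAddGroup G] {K : Set G} {z : G} (hz : z ∈ interior K) :
    (· + z) ⁻¹' K ∈ 𝓝 (0 : G) :=
  (continuous_add_const z).continuousAt.preimage_mem_nhds
    (by simpa using mem_interior_iff_mem_nhds.1 hz)

section RadialProjection

variable {E : Type*} [NormedAddCommGroup E] [NormedSpace ℝ E] {K : Set E} {z x : E}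

noncomputable def centeredGauge (K : Set E) (z x : E) : ℝ := gauge ((· + z) ⁻¹' K) (x - z)

noncomputable def radialProj (K : Set E) (z x : E) : E := z + (centeredGauge K z x)⁻¹ • (x - z)

lemma Convex.exists_lipschitzWith_centeredGauge (hK : Convex ℝ K) (hz : z ∈ interior K) :
    ∃ C, LipschitzWith C (centeredGauge K z) := by
  obtain ⟨C, hC⟩ := (hK.translate_preimage_left z).lipschitz_gauge
    (preimage_add_right_mem_nhds_zero hz)
  exact ⟨C * 1, hC.comp (IsometryEquiv.subRight z).isometry.lipschitz⟩

lemma centeredGauge_eq_one_iff (hK : Convex ℝ K) (hz : z ∈ interior K) :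
    centeredGauge K z x = 1 ↔ x ∈ frontier K := by
  rw [centeredGauge, gauge_eq_one_iff_mem_frontier (hK.translate_preimage_left z)
    (preimage_add_right_mem_nhds_zero hz)]
  exact (Homeomorph.addRight z).preimage_frontier K ▸ by simp

lemma centeredGauge_radialProj (hx : centeredGauge K z x ≠ 0) :
    centeredGauge K z (radialProj K z x) = 1 := by
  rw [centeredGauge, radialProj, add_sub_cancel_left,
    gauge_smul_of_nonneg (a := (centeredGauge K z x)⁻¹) (inv_nonneg.2 (gauge_nonneg _)),
    smul_eq_mul]
  exact inv_mul_cancel₀ hx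

lemma radialProj_eq_self (hx : centeredGauge K z x = 1) : radialProj K z x = x := by
  simp [radialProj, hx]

lemma exists_lipschitzOnWith_radialProj (hK : Convex ℝ K) (hz : z ∈ interior K) {t : Set E}
    (ht : Bornology.IsBounded t) {m : ℝ≥0} (hm : 0 < m)
    (hmt : ∀ x ∈ t, (m : ℝ) ≤ centeredGauge K z x) :
    ∃ C, LipschitzOnWith C (radialProj K z) t := by
  obtain ⟨Kg, hKg⟩ := hK.exists_lipschitzWith_centeredGauge hz
  obtain ⟨R, hR⟩ := ht.subset_closedBall z
  have hinv_le : ∀ x ∈ t, ‖(centeredGauge K z x)⁻¹‖ ≤ (m⁻¹ : ℝ≥0) := by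
    intro x hx
    have hx0 := (NNReal.coe_pos.2 hm).trans_le (hmt x hx)
    rw [Real.norm_of_nonneg (inv_nonneg.2 hx0.le), NNReal.coe_inv]
    exact inv_anti₀ (NNReal.coe_pos.2 hm) (hmt x hx)
  have hsub_le : ∀ x ∈ t, ‖x - z‖ ≤ R.toNNReal := fun x hx =>
    (mem_closedBall_iff_norm.1 (hR hx)).trans (Real.le_coe_toNNReal R)
  have hlip := ((hKg.lipschitzOnWith (s := t)).inv_of_le hm hmt).smul_of_norm_le
    ((IsometryEquiv.subRight z).isometry.lipschitz.lipschitzOnWith (s := t)) hinv_le hsub_le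
  exact ⟨_, fun x hx y hy => by
    simpa only [radialProj, edist_add_left, IsometryEquiv.subRight_apply] using hlip hx hy⟩

theorem Convex.eventually_exists_rectifiable_path_in_frontier (hK : Convex ℝ K)
    (hint : (interior K).Nonempty) {a : E} (ha : a ∈ frontier K) {W : Set E} (hW : W ∈ 𝓝 a) :
    ∀ᶠ b in 𝓝 a, b ∈ frontier K →
      ∃ f : Path a b, (∀ t, f t ∈ W ∩ frontier K) ∧ eVariationOn f univ < ⊤ := by
  obtain ⟨z, hz⟩ := hint
  obtain ⟨Kg, hKg⟩ := hK.exists_lipschitzWith_centeredGauge hz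
  have ha1 : centeredGauge K z a = 1 := (centeredGauge_eq_one_iff hK hz).2 ha
  have hproj : ContinuousAt (radialProj K z) a :=
    continuousAt_const.add ((hKg.continuous.continuousAt.inv₀ (by simp [ha1])).smul
      (continuousAt_id.sub continuousAt_const))
  have hnear : ∀ᶠ x in 𝓝 a, 1 / 2 ≤ centeredGauge K z x ∧ radialProj K z x ∈ W :=
    Filter.Eventually.and
      (hKg.continuous.continuousAt.preimage_mem_nhds (Ici_mem_nhds (by norm_num [ha1])))
      (hproj.preimage_mem_nhds (by rwa [radialProj_eq_self ha1]))
  obtain ⟨δ, hδ, hball⟩ := Metric.eventually_nhds_iff_ball.1 hnear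
  obtain ⟨C, hC⟩ := exists_lipschitzOnWith_radialProj hK hz Metric.isBounded_ball
    (m := 1 / 2) (by norm_num) fun x hx => by simpa using (hball x hx).1
  filter_upwards [Metric.ball_mem_nhds a hδ] with b hb hbK
  have hseg : segment ℝ a b ⊆ Metric.ball a δ :=
    (convex_ball a δ).segment_subset (Metric.mem_ball_self hδ) hb
  have hline : ∀ t : unitInterval, AffineMap.lineMap a b (t : ℝ) ∈ Metric.ball a δ :=
    fun t => hseg (lineMap_mem_segment ℝ a b t.2)
  refine ⟨⟨⟨fun t => radialProj K z (AffineMap.lineMap a b (t : ℝ)), ?_⟩, ?_, ?_⟩,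
    fun t => ⟨(hball _ (hline t)).2, ?_⟩, (hC.mono hseg).eVariationOn_comp_lineMap_lt_top⟩
  · exact hC.continuousOn.comp_continuous
      ((AffineMap.lineMap_continuous).comp continuous_subtype_val) hline
  · simp [radialProj_eq_self ha1]
  · simp [radialProj_eq_self ((centeredGauge_eq_one_iff hK hz).2 hbK)]
  · refine (centeredGauge_eq_one_iff hK hz).1 (centeredGauge_radialProj ?_)
    linarith [(hball _ (hline t)).1]

end RadialProjection

lemma exists_path_lift {M X : Type*} [TopologicalSpace M] [TopologicalSpace X] {r : M → X}
    {U : Set M} {V : Set X} (e : U ≃ₜ V) (he : ∀ x : U, (e x : X) = r x) {p q : M}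
    (hp : p ∈ U) (hq : q ∈ U) (f : Path (r p) (r q)) (hf : ∀ t, f t ∈ V) :
    ∃ γ : Path p q, ∀ t, r (γ t) = f t := by
  have hlift : ∀ x (hx : x ∈ U) (t : unitInterval), f t = r x →
      (e.symm ⟨f t, hf t⟩ : M) = x := fun x hx t hxt => by
    rw [e.symm_apply_eq.2 (Subtype.ext ((he ⟨x, hx⟩).trans hxt.symm).symm)]
  refine ⟨⟨⟨fun t => e.symm ⟨f t, hf t⟩, by fun_prop⟩, hlift p hp 0 f.source,
    hlift q hq 1 f.target⟩, fun t => ?_⟩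
  simpa using (he (e.symm ⟨f t, hf t⟩)).symm

theorem IsLocallyConvexAt.eventually_exists_path_pathLength_lt_top {M : Type*}
    [TopologicalSpace M] {n : ℕ} {r : M → Euc n} {p : M} (hp : IsLocallyConvexAt r p)
    (hr : Continuous r) : ∀ᶠ q in 𝓝 p, ∃ γ : Path p q, pathLength r γ < ⊤ := by
  obtain ⟨U, K, V, hU, hpU, -, hK, hint, -, hpV, ⟨W, hW, rfl⟩, e, he⟩ := hp
  have hrect := hK.eventually_exists_rectifiable_path_in_frontier hint hpV.2 (hW.mem_nhds hpV.1)
  filter_upwards [hU.mem_nhds hpU, (hr.tendsto p).eventually hrect] with q hqU hq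
  obtain ⟨f, hfV, hf⟩ := hq (he ⟨q, hqU⟩ ▸ (e ⟨q, hqU⟩).2.2)
  obtain ⟨γ, hγ⟩ := exists_path_lift e he hpU hqU f hfV
  exact ⟨γ, by rwa [pathLength, funext hγ]⟩

theorem connected_by_finite_length_arcs_general {n : ℕ}
    {M : Type*} [TopologicalSpace M] [ConnectedSpace M]
    (r : M → Euc n) (hr : Continuous r)
    (hlc : ∀ p : M, IsLocallyConvexAt r p) :
    (∀ p q : M, ∃ γ : Path p q, pathLength r γ < ⊤) ∧
    (∀ p q : M, lengthDist r p q < ⊤) ∧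
    PathConnectedSpace M := by
  have hjoin : ∀ p q : M, ∃ γ : Path p q, pathLength r γ < ⊤ := by
    refine PreconnectedSpace.induction₂' _ (fun p => ?_)
      ⟨fun p q s ⟨γ, hγ⟩ ⟨γ', hγ'⟩ =>
        ⟨γ.trans γ', by rw [pathLength_trans]; exact ENNReal.add_lt_top.2 ⟨hγ, hγ'⟩⟩⟩
    filter_upwards [(hlc p).eventually_exists_path_pathLength_lt_top hr] with q ⟨γ, hγ⟩
    exact ⟨⟨γ, hγ⟩, γ.symm, by rwa [pathLength_symm]⟩
  refine ⟨hjoin, fun p q => ?_, ⟨inferInstance, fun p q => ⟨(hjoin p q).choose⟩⟩⟩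
  obtain ⟨γ, hγ⟩ := hjoin p q
  exact (iInf_le _ γ).trans_lt hγ

/-- **Lemma 4 (van Heijenoort).** Any two points of a connected locally convex
`(n-1)`-manifold in `ℝⁿ` can be joined by a path of finite length; in particular the
induced length pseudometric is finite and `M` is path-connected. -/
theorem connected_by_finite_length_arcs {n : ℕ} (hn : 3 ≤ n)
    {M : Type*} [TopologicalSpace M] [T2Space M] [ConnectedSpace M]
    (hman : IsTopManifoldOfDim M (n - 1))
    (r : M → Euc n) (hr : Continuous r)
    (hlc : ∀ p : M, IsLocallyConvexAt r p) :
    (∀ p q : M, ∃ γ : Path p q, pathLength r γ < ⊤) ∧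
    (∀ p q : M, lengthDist r p q < ⊤) ∧
    PathConnectedSpace M :=
  connected_by_finite_length_arcs_general r hr hlc
end

section
/- Let n ≥ 3, let M be a connected topological (n−1)-manifold, and let r : M → ℝⁿ be a continuous map that is locally convex at every point of M. Then the induced length pseudometric d_r induces the topology of M; that is, for every p ∈ M: (i) for every neighborhood U of p there exists ε > 0 such that {q ∈ M | d_r(p,q) < ε} ⊆ U, and (ii) for every ε > 0 the set {q ∈ M | d_r(p,q) < ε} is a neighborhood of p. -/
open scoped RealInnerProductSpace ENNReal
open Set

theorem aux_nhd_subset {n : ℕ} {M : Type*} [TopologicalSpace M] [T2Space M]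
    (r : M → Euc n) (hr : Continuous r) (p : M) (hlc : IsLocallyConvexAt r p)
    {N : Set M} (hN : N ∈ nhds p) :
    ∃ ε : ℝ≥0∞, 0 < ε ∧ {q : M | lengthDist r p q < ε} ⊆ N := by
  obtain ⟨U, K, V, hUopen, hpU, hKcl, hKconv, hKint, hVfr, hpV, ⟨W, hWopen, hVW⟩, e, he⟩ := hlc
  set N' : Set M := interior N with hN'def
  have hN'open : IsOpen N' := isOpen_interior
  have hpN' : p ∈ N' := mem_interior_iff_mem_nhds.2 hN
  -- the image of `U ∩ N'` under `e`, as a subset of `Euc n`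
  set SU : Set ↥U := Subtype.val ⁻¹' N' with hSUdef
  have hSUopen : IsOpen SU := hN'open.preimage continuous_subtype_val
  have heSU : IsOpen (e '' SU) := (Homeomorph.isOpen_image e).2 hSUopen
  obtain ⟨O, hOopen, hOpre⟩ := isOpen_induced_iff.1 heSU
  have hT : Subtype.val '' (e '' SU) = (O ∩ W) ∩ frontier K := by
    rw [← hOpre, Subtype.image_preimage_coe, hVW]
    ext z; constructor
    · rintro ⟨⟨hzW, hzF⟩, hzO⟩; exact ⟨⟨hzO, hzW⟩, hzF⟩
    · rintro ⟨⟨hzO, hzW⟩, hzF⟩; exact ⟨⟨hzW, hzF⟩, hzO⟩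
  -- `r p` lies in this image
  have hpe : (e ⟨p, hpU⟩ : Euc n) = r p := he _
  have hrpT : r p ∈ Subtype.val '' (e '' SU) :=
    ⟨e ⟨p, hpU⟩, ⟨⟨p, hpU⟩, hpN', rfl⟩, hpe⟩
  have hrpOW : r p ∈ O ∩ W := by
    have := hT ▸ hrpT; exact this.1
  obtain ⟨δ, hδpos, hδball⟩ := Metric.isOpen_iff.1 (hOopen.inter hWopen) _ hrpOW
  refine ⟨ENNReal.ofReal δ, ENNReal.ofReal_pos.2 hδpos, fun q hq => ?_⟩
  have hq' : (⨅ γ : Path p q, pathLength r γ) < ENNReal.ofReal δ := hq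
  obtain ⟨γ, hγ⟩ := iInf_lt_iff.1 hq'
  -- the set of times staying in `U ∩ N'` is clopen
  set A : Set unitInterval := γ ⁻¹' (U ∩ N') with hAdef
  have hAopen : IsOpen A := (hUopen.inter hN'open).preimage γ.continuous
  have hA0 : (0 : unitInterval) ∈ A := by
    simp only [hAdef, mem_preimage, γ.source]
    exact ⟨hpU, hpN'⟩
  have hArV : ∀ t ∈ A, r (γ t) ∈ V := by
    intro t ht
    have : (e ⟨γ t, ht.1⟩ : Euc n) = r (γ t) := he _
    rw [← this]; exact (e ⟨γ t, ht.1⟩).2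
  have hAclosed : IsClosed A := by
    rw [← isOpen_compl_iff]
    rw [isOpen_compl_iff, ← closure_subset_iff_isClosed]
    intro t₀ ht₀
    obtain ⟨u, hu, hulim⟩ := mem_closure_iff_seq_limit.1 ht₀
    have hγu : Filter.Tendsto (fun k => γ (u k)) Filter.atTop (nhds (γ t₀)) :=
      (γ.continuous.tendsto t₀).comp hulim
    have hrγu : Filter.Tendsto (fun k => r (γ (u k))) Filter.atTop (nhds (r (γ t₀))) :=
      (hr.tendsto _).comp hγu
    -- the limit point lies on the frontier of `K`
    have hfr : r (γ t₀) ∈ frontier K :=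
      isClosed_frontier.mem_of_tendsto hrγu
        (Filter.Eventually.of_forall fun k => hVfr (hArV _ (hu k)))
    -- and within distance `δ` of `r p`
    have hdist : dist (r (γ t₀)) (r p) < δ := by
      have h1 : edist (r (γ t₀)) (r (γ 0)) ≤ pathLength r γ :=
        eVariationOn.edist_le (fun t => r (γ t)) (mem_univ t₀) (mem_univ 0)
      rw [γ.source] at h1
      have h2 : edist (r (γ t₀)) (r p) < ENNReal.ofReal δ := lt_of_le_of_lt h1 hγ
      rw [edist_dist] at h2
      exact (ENNReal.ofReal_lt_ofReal_iff hδpos).1 h2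
    have hmem : r (γ t₀) ∈ Subtype.val '' (e '' SU) := by
      rw [hT]; exact ⟨hδball hdist, hfr⟩
    obtain ⟨v, hvmem, hveq⟩ := hmem
    obtain ⟨xU, hxU, rfl⟩ := hvmem
    -- show `γ t₀ = xU` by uniqueness of limits
    have hvV : Filter.Tendsto (fun k => (⟨r (γ (u k)), hArV _ (hu k)⟩ : ↥V))
        Filter.atTop (nhds (e xU)) := by
      rw [tendsto_subtype_rng]
      simpa [hveq] using hrγu
    have hγu2 : Filter.Tendsto (fun k => γ (u k)) Filter.atTop (nhds (xU : M)) := by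
      have hcomp : Filter.Tendsto
          (fun k => ((e.symm (⟨r (γ (u k)), hArV _ (hu k)⟩ : ↥V) : ↥U) : M))
          Filter.atTop (nhds ((e.symm (e xU) : ↥U) : M)) :=
        (continuous_subtype_val.tendsto _).comp ((e.symm.continuous.tendsto _).comp hvV)
      rw [e.symm_apply_apply] at hcomp
      convert hcomp using 2 with k
      have : (⟨r (γ (u k)), hArV _ (hu k)⟩ : ↥V) = e ⟨γ (u k), (hu k).1⟩ :=
        Subtype.ext (by simpa using (he ⟨γ (u k), (hu k).1⟩).symm)
      rw [this, e.symm_apply_apply]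
    have : γ t₀ = (xU : M) := tendsto_nhds_unique hγu hγu2
    rw [hAdef, mem_preimage, this]
    exact ⟨xU.2, hxU⟩
  have : A = univ := by
    rcases isClopen_iff.1 ⟨hAclosed, hAopen⟩ with h | h
    · exact absurd (h ▸ hA0) (notMem_empty _)
    · exact h
  have h1A : (1 : unitInterval) ∈ A := this ▸ mem_univ _
  have : γ 1 ∈ N' := h1A.2
  rw [γ.target] at this
  exact interior_subset this

set_option maxHeartbeats 2000000 in
theorem aux_mem_nhds {n : ℕ} {M : Type*} [TopologicalSpace M]
    (r : M → Euc n) (hr : Continuous r) (p : M) (hlc : IsLocallyConvexAt r p)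
    {ε : ℝ≥0∞} (hε : 0 < ε) :
    {q : M | lengthDist r p q < ε} ∈ nhds p := by
  obtain ⟨U, K, V, hUopen, hpU, hKcl, hKconv, hKint, hVfr, hpV, ⟨W, hWopen, hVW⟩, e, he⟩ := hlc
  -- pick a real target length `η`
  obtain ⟨η, hη0, hηε⟩ : ∃ η : ℝ, 0 < η ∧ ENNReal.ofReal η < ε := by
    rcases eq_or_ne ε ⊤ with rfl | htop
    · exact ⟨1, one_pos, by simp [ENNReal.ofReal_lt_top]⟩
    · have htR : 0 < ε.toReal := ENNReal.toReal_pos hε.ne' htop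
      refine ⟨ε.toReal / 2, by linarith, ?_⟩
      rw [ENNReal.ofReal_lt_iff_lt_toReal (by linarith) htop]
      linarith
  -- set up the gauge of the translated body
  obtain ⟨x₀, hx₀⟩ := hKint
  obtain ⟨ρ, hρ, hρball⟩ := Metric.isOpen_iff.1 isOpen_interior x₀ hx₀
  have hρK : Metric.ball x₀ ρ ⊆ K := hρball.trans interior_subset
  set K₀ : Set (Euc n) := (fun y => y - x₀) '' K with hK₀def
  have hK₀conv : Convex ℝ K₀ := by
    have h1 : K₀ = (fun y => -x₀ + y) '' K := by
      rw [hK₀def]; ext z; simp [sub_eq_neg_add]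
    rw [h1]; exact hKconv.translate _
  have hball0 : Metric.ball (0 : Euc n) ρ ⊆ K₀ := by
    intro z hz
    refine ⟨z + x₀, hρK ?_, add_sub_cancel_right z x₀⟩
    simpa [dist_eq_norm] using mem_ball_iff_norm.1 hz
  have hK₀nhds : K₀ ∈ nhds (0 : Euc n) :=
    Filter.mem_of_superset (Metric.ball_mem_nhds 0 hρ) hball0
  set g : Euc n → ℝ := fun y => gauge K₀ (y - x₀) with hgdef
  -- frontier characterization
  have hfrK₀ : ∀ y : Euc n, y ∈ frontier K ↔ y - x₀ ∈ frontier K₀ := by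
    intro y
    have h1 : K₀ = (Homeomorph.subRight x₀) '' K := rfl
    rw [h1, ← Homeomorph.image_frontier]
    constructor
    · intro hy; exact ⟨y, hy, rfl⟩
    · rintro ⟨z, hz, hzeq⟩
      have : z = y := by
        have : z - x₀ = y - x₀ := hzeq
        simpa [sub_left_inj] using this
      exact this ▸ hz
  have hgfr : ∀ y : Euc n, y ∈ frontier K ↔ g y = 1 := by
    intro y
    rw [hfrK₀, ← gauge_eq_one_iff_mem_frontier hK₀conv hK₀nhds]
  -- `g` is Lipschitz
  have hglip : ∀ x y : Euc n, dist (g x) (g y) ≤ ρ⁻¹ * dist x y := by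
    have lw := hK₀conv.lipschitzWith_gauge (r := ⟨ρ, hρ.le⟩) (by exact_mod_cast hρ) hball0
    intro x y
    have := lw.dist_le_mul (x - x₀) (y - x₀)
    rw [dist_sub_right] at this
    exact this
  set a : Euc n := r p with hadef
  have hafr : a ∈ frontier K := hVfr hpV
  have hga : g a = 1 := (hgfr a).1 hafr
  -- lower bound for `g` near `a`
  have hglb : ∀ y : Euc n, dist y a ≤ ρ / 2 → 1 / 2 ≤ g y := by
    intro y hy
    have h1 : dist (g y) (g a) ≤ ρ⁻¹ * dist y a := hglip y a
    have h2 : ρ⁻¹ * dist y a ≤ ρ⁻¹ * (ρ / 2) := by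
      apply mul_le_mul_of_nonneg_left hy (by positivity)
    have h3 : ρ⁻¹ * (ρ / 2) = 1 / 2 := by field_simp
    have h4 : |g y - g a| ≤ 1 / 2 := by
      rw [← Real.dist_eq]; linarith
    have := abs_le.1 h4
    linarith [hga ▸ this.1]
  set π : Euc n → Euc n := fun y => x₀ + (g y)⁻¹ • (y - x₀) with hπdef
  have hπg : ∀ y : Euc n, 0 < g y → g (π y) = 1 := by
    intro y hy
    have h1 : π y - x₀ = (g y)⁻¹ • (y - x₀) := add_sub_cancel_left x₀ _
    rw [hgdef]
    show gauge K₀ (π y - x₀) = 1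
    rw [h1, gauge_smul_of_nonneg (inv_nonneg.2 hy.le), smul_eq_mul]
    exact inv_mul_cancel₀ (ne_of_gt hy)
  have hπfr : ∀ y : Euc n, 0 < g y → π y ∈ frontier K := fun y hy =>
    (hgfr _).2 (hπg y hy)
  have hπfix : ∀ y : Euc n, y ∈ frontier K → π y = y := by
    intro y hy
    show x₀ + (g y)⁻¹ • (y - x₀) = y
    rw [(hgfr y).1 hy]
    simp
  -- Lipschitz bound for `π` on the ball of radius `ρ/2` around `a`
  obtain ⟨L, hL2, hπlip⟩ : ∃ L : ℝ, 2 ≤ L ∧ ∀ x y : Euc n, dist x a ≤ ρ / 2 →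
      dist y a ≤ ρ / 2 → dist (π x) (π y) ≤ L * dist x y := by
    have hR0 : (0:ℝ) ≤ ‖a - x₀‖ + ρ := by positivity
    set R : ℝ := ‖a - x₀‖ + ρ with hRdef
    refine ⟨2 + 4 * R / ρ, by
      have h4 : (0:ℝ) ≤ 4 * R / ρ := div_nonneg (by linarith) hρ.le
      linarith, ?_⟩
    intro x y hx hy
    have hgx : 1 / 2 ≤ g x := hglb x hx
    have hgy : 1 / 2 ≤ g y := hglb y hy
    have hgx0 : 0 < g x := by linarith
    have hgy0 : 0 < g y := by linarith
    have hyx₀ : ‖y - x₀‖ ≤ R := by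
      have h1 : ‖y - x₀‖ ≤ ‖y - a‖ + ‖a - x₀‖ := by
        have : y - x₀ = (y - a) + (a - x₀) := by abel
        rw [this]; exact norm_add_le _ _
      have h2 : ‖y - a‖ ≤ ρ / 2 := by rwa [← dist_eq_norm]
      rw [hRdef]; linarith
    have key : π x - π y = (g x)⁻¹ • (x - y) + ((g x)⁻¹ - (g y)⁻¹) • (y - x₀) := by
      show (x₀ + (g x)⁻¹ • (x - x₀)) - (x₀ + (g y)⁻¹ • (y - x₀)) = _
      module
    rw [dist_eq_norm, key]
    have hterm1 : ‖(g x)⁻¹ • (x - y)‖ ≤ 2 * dist x y := by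
      rw [norm_smul, Real.norm_eq_abs, abs_of_nonneg (by positivity), ← dist_eq_norm]
      apply mul_le_mul_of_nonneg_right _ dist_nonneg
      rw [← one_div]
      rw [div_le_iff₀ hgx0]
      linarith
    have hterm2 : ‖((g x)⁻¹ - (g y)⁻¹) • (y - x₀)‖ ≤ (4 * R / ρ) * dist x y := by
      rw [norm_smul, Real.norm_eq_abs]
      have habs : |(g x)⁻¹ - (g y)⁻¹| ≤ 4 * (ρ⁻¹ * dist x y) := by
        rw [inv_sub_inv (ne_of_gt hgx0) (ne_of_gt hgy0), abs_div]
        have hd : |g x * g y| = g x * g y := abs_of_pos (by positivity)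
        rw [hd]
        have hge : (1:ℝ) / 4 ≤ g x * g y := by nlinarith
        have hnum : |g y - g x| ≤ ρ⁻¹ * dist x y := by
          rw [abs_sub_comm, ← Real.dist_eq]
          exact hglip x y
        rw [div_le_iff₀ (by positivity)]
        nlinarith [abs_nonneg (g y - g x), mul_le_mul_of_nonneg_left hge
          (le_trans (abs_nonneg (g y - g x)) hnum)]
      calc |(g x)⁻¹ - (g y)⁻¹| * ‖y - x₀‖
          ≤ (4 * (ρ⁻¹ * dist x y)) * R :=
            mul_le_mul habs hyx₀ (norm_nonneg _) (by positivity)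
        _ = (4 * R / ρ) * dist x y := by field_simp
    calc ‖(g x)⁻¹ • (x - y) + ((g x)⁻¹ - (g y)⁻¹) • (y - x₀)‖
        ≤ ‖(g x)⁻¹ • (x - y)‖ + ‖((g x)⁻¹ - (g y)⁻¹) • (y - x₀)‖ := norm_add_le _ _
      _ ≤ 2 * dist x y + (4 * R / ρ) * dist x y := add_le_add hterm1 hterm2
      _ = (2 + 4 * R / ρ) * dist x y := by ring
  have hL0 : (0:ℝ) < L := by linarith
  -- choose the radius of the neighborhood
  have haW : a ∈ W := by
    have := hpV; rw [hVW] at this; exact this.1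
  obtain ⟨τ, hτ0, hτW⟩ := Metric.isOpen_iff.1 hWopen a haW
  obtain ⟨s', hs'0, hs'ρ, hs'τ, hs'η⟩ : ∃ s' : ℝ, 0 < s' ∧ s' ≤ ρ / 4 ∧
      L * s' ≤ τ / 2 ∧ L * s' ≤ η / 2 := by
    refine ⟨min (ρ / 4) (min (τ / (2 * L)) (η / (2 * L))),
      lt_min (by positivity) (lt_min (div_pos hτ0 (by linarith)) (div_pos hη0 (by linarith))),
      min_le_left _ _, ?_, ?_⟩
    · have h1 : min (ρ / 4) (min (τ / (2 * L)) (η / (2 * L))) ≤ τ / (2 * L) :=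
        (min_le_right _ _).trans (min_le_left _ _)
      rw [le_div_iff₀ (by linarith)] at h1
      nlinarith [h1]
    · have h1 : min (ρ / 4) (min (τ / (2 * L)) (η / (2 * L))) ≤ η / (2 * L) :=
        (min_le_right _ _).trans (min_le_right _ _)
      rw [le_div_iff₀ (by linarith)] at h1
      nlinarith [h1]
  -- the neighborhood
  refine Filter.mem_of_superset
    ((hUopen.inter ((Metric.isOpen_ball (x := a) (ε := s')).preimage hr)).mem_nhds
      ⟨hpU, by simpa [hadef] using Metric.mem_ball_self (x := a) hs'0⟩) ?_
  rintro q ⟨hqU, hqball⟩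
  have hqb : dist (r q) a < s' := by simpa [hadef] using hqball
  set b : Euc n := r q with hbdef
  have hbV : b ∈ V := by
    have : (e ⟨q, hqU⟩ : Euc n) = r q := he _
    rw [hbdef, ← this]; exact (e ⟨q, hqU⟩).2
  have hbfr : b ∈ frontier K := hVfr hbV
  -- the segment and its projection
  set c : unitInterval → Euc n := fun t => a + (t : ℝ) • (b - a) with hcdef
  have hcball : ∀ t : unitInterval, dist (c t) a ≤ ρ / 2 := by
    intro t
    have h1 : dist (c t) a = (t : ℝ) * ‖b - a‖ := by
      rw [hcdef, dist_eq_norm]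
      simp [norm_smul, abs_of_nonneg t.2.1]
    rw [h1]
    have h2 : (t : ℝ) * ‖b - a‖ ≤ ‖b - a‖ := by
      apply mul_le_of_le_one_left (norm_nonneg _) t.2.2
    have h3 : ‖b - a‖ < s' := by rwa [← dist_eq_norm]
    linarith
  have hgc : ∀ t : unitInterval, 0 < g (c t) := fun t => lt_of_lt_of_le one_half_pos
    (by simpa using hglb _ (hcball t))
  have hπc_fr : ∀ t : unitInterval, π (c t) ∈ frontier K := fun t => hπfr _ (hgc t)
  have hc0 : c 0 = a := by simp [hcdef]
  have hc1 : c 1 = b := by simp [hcdef]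
  have hπcV : ∀ t : unitInterval, π (c t) ∈ V := by
    intro t
    rw [hVW]
    refine ⟨hτW ?_, hπc_fr t⟩
    have h1 : dist (π (c t)) (π a) ≤ L * dist (c t) a := hπlip _ _ (hcball t) (by rw [dist_self]; positivity)
    rw [hπfix a hafr] at h1
    have h2 : dist (c t) a ≤ ‖b - a‖ := by
      have := hcball t
      have h1' : dist (c t) a = (t : ℝ) * ‖b - a‖ := by
        rw [hcdef, dist_eq_norm]; simp [norm_smul, abs_of_nonneg t.2.1]
      rw [h1']
      exact mul_le_of_le_one_left (norm_nonneg _) t.2.2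
    have h3 : ‖b - a‖ < s' := by rwa [← dist_eq_norm]
    have : dist (π (c t)) a < L * s' := by
      calc dist (π (c t)) a ≤ L * dist (c t) a := h1
        _ ≤ L * ‖b - a‖ := mul_le_mul_of_nonneg_left h2 hL0.le
        _ < L * s' := by apply mul_lt_mul_of_pos_left h3 hL0
    apply Metric.mem_ball.2
    calc dist (π (c t)) a < L * s' := this
      _ ≤ τ / 2 := hs'τ
      _ < τ := by linarith
  -- build the path
  have hcont : Continuous fun t : unitInterval => π (c t) := by
    have hccont : Continuous c := by
      rw [hcdef]; fun_prop
    have hgcont : Continuous g := by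
      rw [hgdef]
      exact (continuous_gauge hK₀conv hK₀nhds).comp (continuous_id.sub continuous_const)
    rw [hπdef]
    refine continuous_const.add (Continuous.smul (f := fun t => (g (c t))⁻¹) (g := fun t => c t - x₀) ?_ (hccont.sub continuous_const))
    exact ((hgcont.comp hccont).inv₀ fun t => (hgc t).ne')
  set γfun : unitInterval → M := fun t => ((e.symm ⟨π (c t), hπcV t⟩ : ↥U) : M) with hγdef
  have hγcont : Continuous γfun := by
    apply continuous_subtype_val.comp
    apply e.symm.continuous.comp
    rw [continuous_induced_rng]
    exact hcont
  have heq : ∀ t : unitInterval, r (γfun t) = π (c t) := by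
    intro t
    have := he (e.symm ⟨π (c t), hπcV t⟩)
    rw [← this, e.apply_symm_apply]
  have hγ0 : γfun 0 = p := by
    have h1 : (⟨π (c 0), hπcV 0⟩ : ↥V) = e ⟨p, hpU⟩ := by
      apply Subtype.ext
      show π (c 0) = (e ⟨p, hpU⟩ : Euc n)
      rw [hc0, hπfix a hafr, he ⟨p, hpU⟩]
    rw [hγdef]
    simp only [h1, e.symm_apply_apply]
  have hγ1 : γfun 1 = q := by
    have h1 : (⟨π (c 1), hπcV 1⟩ : ↥V) = e ⟨q, hqU⟩ := by
      apply Subtype.ext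
      show π (c 1) = (e ⟨q, hqU⟩ : Euc n)
      rw [hc1, hπfix b hbfr, he ⟨q, hqU⟩]
    rw [hγdef]
    simp only [h1, e.symm_apply_apply]
  set γ : Path p q := ⟨⟨γfun, hγcont⟩, hγ0, hγ1⟩ with hγpdef
  -- bound the length
  have hlen : pathLength r γ < ENNReal.ofReal η := by
    have hrγ : (fun t : unitInterval => r (γ t)) = fun t => π (c t) := by
      funext t; exact heq t
    rw [pathLength]
    show eVariationOn (fun t : unitInterval => r (γ t)) univ < ENNReal.ofReal η
    rw [hrγ]
    -- Lipschitz constant for `π ∘ c` as a function of the real parameter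
    set F : ℝ → Euc n := fun x => π (a + x • (b - a)) with hFdef
    set Cnn : NNReal := (L * ‖b - a‖).toNNReal with hCdef
    have hFlip : LipschitzOnWith Cnn F (Icc (0:ℝ) 1) := by
      apply LipschitzOnWith.of_dist_le_mul
      intro x hx y hy
      have hmemx : dist (a + x • (b - a)) a ≤ ρ / 2 := by
        rw [dist_eq_norm]
        simp only [add_sub_cancel_left]
        rw [norm_smul, Real.norm_eq_abs, abs_of_nonneg hx.1]
        have h3 : ‖b - a‖ < s' := by rwa [← dist_eq_norm]
        have := mul_le_of_le_one_left (norm_nonneg (b - a)) hx.2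
        linarith
      have hmemy : dist (a + y • (b - a)) a ≤ ρ / 2 := by
        rw [dist_eq_norm]
        simp only [add_sub_cancel_left]
        rw [norm_smul, Real.norm_eq_abs, abs_of_nonneg hy.1]
        have h3 : ‖b - a‖ < s' := by rwa [← dist_eq_norm]
        have := mul_le_of_le_one_left (norm_nonneg (b - a)) hy.2
        linarith
      calc dist (F x) (F y) ≤ L * dist (a + x • (b - a)) (a + y • (b - a)) :=
            hπlip _ _ hmemx hmemy
        _ = L * (|x - y| * ‖b - a‖) := by
            rw [dist_eq_norm]
            congr 1
            have : (a + x • (b - a)) - (a + y • (b - a)) = (x - y) • (b - a) := by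
              rw [sub_smul]; abel
            rw [this, norm_smul, Real.norm_eq_abs]
        _ = (Cnn : ℝ) * dist x y := by
            rw [hCdef, Real.coe_toNNReal _ (mul_nonneg hL0.le (norm_nonneg _)), Real.dist_eq]
            ring
    have hmaps : MapsTo (Subtype.val : unitInterval → ℝ) univ (Icc (0:ℝ) 1) :=
      fun t _ => t.2
    have h1 : eVariationOn (fun t : unitInterval => π (c t)) univ
        ≤ (Cnn : ℝ≥0∞) * eVariationOn (Subtype.val : unitInterval → ℝ) univ := by
      have := hFlip.comp_eVariationOn_le hmaps
      convert this using 2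
      rfl
    have h2 : eVariationOn (Subtype.val : unitInterval → ℝ) univ ≤ 1 := by
      have hmono : MonotoneOn (Subtype.val : unitInterval → ℝ) univ :=
        fun x _ y _ h => h
      have := hmono.eVariationOn_le (mem_univ (0 : unitInterval)) (mem_univ 1)
      have huniv : (univ : Set unitInterval) ∩ Icc 0 1 = univ := by
        ext t; simp [unitInterval.nonneg', unitInterval.le_one']
      rw [huniv] at this
      simpa using this
    calc eVariationOn (fun t : unitInterval => π (c t)) univ
        ≤ (Cnn : ℝ≥0∞) * 1 := le_trans h1 (by gcongr)
      _ = (Cnn : ℝ≥0∞) := mul_one _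
      _ = ENNReal.ofReal (L * ‖b - a‖) := by rw [hCdef]; rfl
      _ < ENNReal.ofReal η := by
          apply ENNReal.ofReal_lt_ofReal_iff hη0 |>.2
          have h3 : ‖b - a‖ < s' := by rwa [← dist_eq_norm]
          calc L * ‖b - a‖ ≤ L * s' := by
                rcases eq_or_lt_of_le (norm_nonneg (b - a)) with h | h
                · rw [← h]; simpa using mul_nonneg hL0.le hs'0.le
                · exact le_of_lt (mul_lt_mul_of_pos_left h3 hL0)
            _ ≤ η / 2 := hs'η
            _ < η := by linarith
  show lengthDist r p q < ε
  calc lengthDist r p q ≤ pathLength r γ := iInf_le _ _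
    _ < ENNReal.ofReal η := hlen
    _ < ε := hηε

/-- **Lemma 5 (van Heijenoort).** The topology defined by the induced length
pseudometric `lengthDist r` coincides with the original topology of `M`. -/
theorem lengthDist_induces_topology {n : ℕ} (hn : 3 ≤ n)
    {M : Type*} [TopologicalSpace M] [T2Space M] [ConnectedSpace M]
    (hman : IsTopManifoldOfDim M (n - 1))
    (r : M → Euc n) (hr : Continuous r)
    (hlc : ∀ p : M, IsLocallyConvexAt r p) :
    ∀ p : M,
      (∀ U ∈ nhds p, ∃ ε : ℝ≥0∞, 0 < ε ∧ {q : M | lengthDist r p q < ε} ⊆ U) ∧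
      (∀ ε : ℝ≥0∞, 0 < ε → {q : M | lengthDist r p q < ε} ∈ nhds p) := by
  intro p
  exact ⟨fun U hU => aux_nhd_subset r hr p (hlc p) hU,
    fun ε hε => aux_mem_nhds r hr p (hlc p) hε⟩
end
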